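/- arXiv:2001.00678 — 6 statements merged into one kernel-verified Lean document; each statement's English description precedes it below -/
import Mathlib

section
/- The polynomial λ ↦ det(λM + K) is not identically zero; that is, there exists λ ∈ ℝ such that det(λM + K) ≠ 0 (so the matrix pencil λM + K is regular). -/
/-! Taking the Schur complement `S = Ku - Kuφ Kφ⁻¹ Kuφᵀ` gives
`det (λ M + K) = det Kφ * det (λ Mu + S)`. The second factor is the evaluation of a polynomial
whose coefficient of `λ ^ nu` is `det Mu ≠ 0`, and a nonzero real polynomial has a non-root. -/

open Matrix Polynomial

theorem Matrix.eval_det_X_smul_add_C {n R : Type*} [Fintype n] [DecidableEq n] [CommRing R]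
    (A B : Matrix n n R) (l : R) :
    (det ((X : R[X]) • A.map C + B.map C)).eval l = det (l • A + B) := by
  rw [← coe_evalRingHom, RingHom.map_det]
  congr 1
  ext i j
  simp only [coe_evalRingHom, RingHom.mapMatrix_apply, map_apply, add_apply, smul_apply,
    smul_eq_mul, eval_add, eval_mul, eval_X, eval_C]

theorem Matrix.exists_det_smul_add_ne_zero {n R : Type*} [Fintype n] [DecidableEq n]
    [CommRing R] [IsDomain R] [Infinite R] {A : Matrix n n R} (hA : IsUnit A)
    (B : Matrix n n R) : ∃ l : R, det (l • A + B) ≠ 0 := by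
  have hp : det ((X : R[X]) • A.map C + B.map C) ≠ 0 := fun h => by
    have hcoeff := coeff_det_X_add_C_card A B
    rw [h, coeff_zero] at hcoeff
    exact ((isUnit_iff_isUnit_det A).mp hA).ne_zero hcoeff.symm
  by_contra! h
  exact hp (zero_of_eval_zero _ fun l => by rw [eval_det_X_smul_add_C, h l])

theorem Matrix.smul_fromBlocks_zero_add_fromBlocks {l m α R : Type*} [Monoid R] [AddMonoid α]
    [DistribMulAction R α] (r : R)
    (A A' : Matrix l l α) (B : Matrix l m α) (C : Matrix m l α) (D : Matrix m m α) :
    r • fromBlocks A 0 0 0 + fromBlocks A' B C D = fromBlocks (r • A + A') B C D := by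
  simp only [fromBlocks_smul, fromBlocks_add, smul_zero, zero_add]

theorem pencil_regular_general (nu nφ : ℕ)
    (Mu Ku : Matrix (Fin nu) (Fin nu) ℝ)
    (Kuφ : Matrix (Fin nu) (Fin nφ) ℝ)
    (Kφ : Matrix (Fin nφ) (Fin nφ) ℝ)
    (hMuUnit : IsUnit Mu)
    (hKφUnit : IsUnit Kφ)
    (M : Matrix (Fin nu ⊕ Fin nφ) (Fin nu ⊕ Fin nφ) ℝ)
    (K : Matrix (Fin nu ⊕ Fin nφ) (Fin nu ⊕ Fin nφ) ℝ)
    (hM : M = fromBlocks Mu 0 0 0)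
    (hK : K = fromBlocks Ku Kuφ Kuφᵀ Kφ) :
    ∃ l : ℝ, (l • M + K).det ≠ 0 := by
  obtain ⟨_⟩ := hKφUnit.nonempty_invertible
  obtain ⟨l, hl⟩ := exists_det_smul_add_ne_zero hMuUnit (Ku - Kuφ * ⅟Kφ * Kuφᵀ)
  refine ⟨l, ?_⟩
  rw [hM, hK, smul_fromBlocks_zero_add_fromBlocks, det_fromBlocks₂₂, add_sub_assoc]
  exact mul_ne_zero ((isUnit_iff_isUnit_det Kφ).mp hKφUnit).ne_zero hl

/-- For the undamped piezoelectric pencil `λ M + K` with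
`M = [[Mu, 0],[0,0]]`, `K = [[Ku, Kuφ],[Kuφᵀ, Kφ]]`, `Mu` symmetric invertible,
`Ku`, `Kφ` symmetric, `Kφ` invertible, the polynomial `λ ↦ det (λ M + K)` is not
identically zero: there is `λ : ℝ` with `det (λ M + K) ≠ 0`. -/
theorem pencil_regular (nu nφ : ℕ)
    (Mu Ku : Matrix (Fin nu) (Fin nu) ℝ)
    (Kuφ : Matrix (Fin nu) (Fin nφ) ℝ)
    (Kφ : Matrix (Fin nφ) (Fin nφ) ℝ)
    (hMuSymm : Muᵀ = Mu) (hMuUnit : IsUnit Mu)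
    (hKuSymm : Kuᵀ = Ku)
    (hKφSymm : Kφᵀ = Kφ) (hKφUnit : IsUnit Kφ)
    (M : Matrix (Fin nu ⊕ Fin nφ) (Fin nu ⊕ Fin nφ) ℝ)
    (K : Matrix (Fin nu ⊕ Fin nφ) (Fin nu ⊕ Fin nφ) ℝ)
    (hM : M = fromBlocks Mu 0 0 0)
    (hK : K = fromBlocks Ku Kuφ Kuφᵀ Kφ) :
    ∃ l : ℝ, (l • M + K).det ≠ 0 :=
  pencil_regular_general nu nφ Mu Ku Kuφ Kφ hMuUnit hKφUnit M K hM hK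
end

section
/- The polynomial λ ↦ det(λM + K) has degree exactly n_u; its leading coefficient is det(K_φ)·det(M_u) ≠ 0. -/
open Matrix Polynomial

/-- For the undamped piezoelectric pencil `λ M + K` with
`M = [[Mu, 0],[0,0]]`, `K = [[Ku, Kuφ],[Kuφᵀ, Kφ]]`, `Mu` symmetric invertible,
`Ku`, `Kφ` symmetric, `Kφ` invertible, the polynomial `λ ↦ det (λ M + K)` has
degree exactly `nu`, and its leading coefficient is `det Kφ * det Mu ≠ 0`. -/
theorem pencil_det_degree (nu nφ : ℕ)
    (Mu Ku : Matrix (Fin nu) (Fin nu) ℝ)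
    (Kuφ : Matrix (Fin nu) (Fin nφ) ℝ)
    (Kφ : Matrix (Fin nφ) (Fin nφ) ℝ)
    (hMuSymm : Muᵀ = Mu) (hMuUnit : IsUnit Mu)
    (hKuSymm : Kuᵀ = Ku)
    (hKφSymm : Kφᵀ = Kφ) (hKφUnit : IsUnit Kφ)
    (M : Matrix (Fin nu ⊕ Fin nφ) (Fin nu ⊕ Fin nφ) ℝ)
    (K : Matrix (Fin nu ⊕ Fin nφ) (Fin nu ⊕ Fin nφ) ℝ)
    (hM : M = fromBlocks Mu 0 0 0)
    (hK : K = fromBlocks Ku Kuφ Kuφᵀ Kφ)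
    (P : ℝ[X])
    (hP : P = ((X : ℝ[X]) • M.map C + K.map C).det) :
    P.degree = (nu : ℕ) ∧ P.leadingCoeff = Kφ.det * Mu.det ∧ Kφ.det * Mu.det ≠ 0 := by
  haveI := hKφUnit.invertible
  haveI := hMuUnit.invertible
  haveI : Invertible (Kφ.map (C : ℝ →+* ℝ[X]).toFun) := Invertible.map (C : ℝ →+* ℝ[X]).mapMatrix Kφ
  haveI hKφCinv : Invertible (Kφ.map (C : ℝ → ℝ[X])) := this
  have hblock : ((X : ℝ[X]) • M.map C + K.map C) =
      fromBlocks ((X : ℝ[X]) • Mu.map C + Ku.map C) (Kuφ.map C) (Kuφᵀ.map C) (Kφ.map C) := by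
    rw [hM, hK]
    simp [fromBlocks_map, fromBlocks_smul, fromBlocks_add, Matrix.map_zero]
  have hinvmap : ⅟(Kφ.map (C : ℝ → ℝ[X])) = (⅟Kφ).map C := by
    apply invOf_eq_right_inv
    rw [← Matrix.map_mul, mul_invOf_self]
    simp
  set E : Matrix (Fin nu) (Fin nu) ℝ := Ku - Kuφ * ⅟Kφ * Kuφᵀ with hE
  have hschur : (X : ℝ[X]) • Mu.map C + Ku.map C - Kuφ.map C * ⅟(Kφ.map (C : ℝ → ℝ[X])) * Kuφᵀ.map C
      = (X : ℝ[X]) • Mu.map C + E.map C := by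
    rw [hinvmap, ← Matrix.map_mul, ← Matrix.map_mul, hE,
      Matrix.map_sub _ (fun a b => map_sub C a b)]
    abel
  set F : Matrix (Fin nu) (Fin nu) ℝ := -(⅟Mu * E) with hF
  have hfac : (X : ℝ[X]) • Mu.map C + E.map C = Mu.map C * charmatrix F := by
    rw [charmatrix, hF]
    have h1 : ((-(⅟Mu * E) : Matrix (Fin nu) (Fin nu) ℝ)).map C = -((⅟Mu * E).map C) := by
      ext i j; simp only [Matrix.map_apply, Matrix.neg_apply, map_neg]
    rw [RingHom.mapMatrix_apply]
    show _ = Mu.map ⇑C * (Matrix.scalar (Fin nu) (X : ℝ[X]) - (-(⅟Mu * E)).map C)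
    rw [h1, sub_neg_eq_add, Matrix.mul_add, ← Matrix.map_mul, mul_invOf_cancel_left]
    congr 1
    ext i j
    simp only [Matrix.scalar_apply, Matrix.mul_diagonal, Matrix.smul_apply, smul_eq_mul, mul_comm]
  have hdet : P = C Kφ.det * (C Mu.det * (charmatrix F).det) := by
    rw [hP, hblock, det_fromBlocks₂₂, hschur, hfac, det_mul]
    congr 1
    · exact (RingHom.map_det C Kφ).symm
    · congr 1
      exact (RingHom.map_det C Mu).symm
  have hKφ0 : Kφ.det ≠ 0 := (Matrix.isUnit_iff_isUnit_det Kφ |>.mp hKφUnit).ne_zero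
  have hMu0 : Mu.det ≠ 0 := (Matrix.isUnit_iff_isUnit_det Mu |>.mp hMuUnit).ne_zero
  have hP' : P = C (Kφ.det * Mu.det) * F.charpoly := by
    rw [hdet, Matrix.charpoly, C_mul, mul_assoc]
  have hne : Kφ.det * Mu.det ≠ 0 := mul_ne_zero hKφ0 hMu0
  have hmon : F.charpoly.Monic := Matrix.charpoly_monic F
  have hdeg : F.charpoly.degree = (nu : ℕ) := by
    rw [Matrix.charpoly_degree_eq_dim, Fintype.card_fin]
  refine ⟨?_, ?_, hne⟩
  · rw [hP', Polynomial.degree_C_mul hne, hdeg]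
  · rw [hP', Polynomial.leadingCoeff_mul, Polynomial.leadingCoeff_C, hmon.leadingCoeff, mul_one]
end

section
/- Zero is a root of the polynomial λ ↦ det(M + λK) of multiplicity exactly n_φ; that is, det(M + λK) = λ^{n_φ}·q(λ) for a polynomial q with q(0) = det(M_u)·det(K_φ) ≠ 0. (In other words, the algebraic multiplicity of the eigenvalue at infinity of the pencil λM + K equals n_φ.) -/
open Matrix Polynomial

/-- For the undamped piezoelectric pencil with
`M = [[Mu, 0],[0,0]]`, `K = [[Ku, Kuφ],[Kuφᵀ, Kφ]]`, `Mu` symmetric invertible,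
`Ku`, `Kφ` symmetric, `Kφ` invertible, zero is a root of the polynomial
`λ ↦ det (M + λ K)` of multiplicity exactly `nφ`:
`det (M + λ K) = λ ^ nφ * q (λ)` with `q 0 = det Mu * det Kφ ≠ 0`. -/
theorem pencil_infinite_multiplicity (nu nφ : ℕ)
    (Mu Ku : Matrix (Fin nu) (Fin nu) ℝ)
    (Kuφ : Matrix (Fin nu) (Fin nφ) ℝ)
    (Kφ : Matrix (Fin nφ) (Fin nφ) ℝ)
    (hMuSymm : Muᵀ = Mu) (hMuUnit : IsUnit Mu)
    (hKuSymm : Kuᵀ = Ku)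
    (hKφSymm : Kφᵀ = Kφ) (hKφUnit : IsUnit Kφ)
    (M : Matrix (Fin nu ⊕ Fin nφ) (Fin nu ⊕ Fin nφ) ℝ)
    (K : Matrix (Fin nu ⊕ Fin nφ) (Fin nu ⊕ Fin nφ) ℝ)
    (hM : M = fromBlocks Mu 0 0 0)
    (hK : K = fromBlocks Ku Kuφ Kuφᵀ Kφ) :
    ∃ q : ℝ[X],
      (M.map C + (X : ℝ[X]) • K.map C).det = (X : ℝ[X]) ^ nφ * q ∧
      q.eval 0 = Mu.det * Kφ.det ∧ Mu.det * Kφ.det ≠ 0 := by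
  subst hM hK
  set Q : Matrix (Fin nu ⊕ Fin nφ) (Fin nu ⊕ Fin nφ) ℝ[X] :=
    fromBlocks (Mu.map C + (X : ℝ[X]) • Ku.map C) ((X : ℝ[X]) • Kuφ.map C)
      (Kuφᵀ.map C) (Kφ.map C) with hQ
  refine ⟨Q.det, ?_, ?_, ?_⟩
  · have hfac :
        (fromBlocks Mu 0 0 0).map C + (X : ℝ[X]) • (fromBlocks Ku Kuφ Kuφᵀ Kφ).map C =
          Matrix.diagonal (Sum.elim (fun _ => (1 : ℝ[X])) (fun _ => (X : ℝ[X]))) * Q := by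
      ext i j
      rcases i with i | i <;> rcases j with j | j <;>
        simp [hQ, Matrix.diagonal_mul, Matrix.fromBlocks]
    rw [hfac, Matrix.det_mul, Matrix.det_diagonal, Fintype.prod_sum_type]
    simp
  · have : Q.map (eval 0) = fromBlocks Mu 0 Kuφᵀ Kφ := by
      ext i j
      rcases i with i | i <;> rcases j with j | j <;>
        simp [hQ, Matrix.fromBlocks]
    have hdet : (Q.map (eval 0)).det = Mu.det * Kφ.det := by
      rw [this, Matrix.det_fromBlocks_zero₁₂]
    rw [← hdet]
    exact (RingHom.map_det (evalRingHom (0 : ℝ)) Q)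
  · have h1 : Mu.det ≠ 0 := (Matrix.isUnit_iff_isUnit_det Mu).mp hMuUnit |>.ne_zero
    have h2 : Kφ.det ≠ 0 := (Matrix.isUnit_iff_isUnit_det Kφ).mp hKφUnit |>.ne_zero
    exact mul_ne_zero h1 h2
end

section
/- Suppose M·X̂ + K·X̂·[[Ĵ₁⁻¹, 0],[0, 0]] = 0, where the inner block matrix is n×n with blocks of sizes n_u and n_φ. Then, partitioning X̂ = [[X̂₁₁, X̂₁₂],[X̂₂₁, X̂₂₂]] with X̂₁₁ ∈ ℝ^{n_u×n_u} and X̂₂₂ ∈ ℝ^{n_φ×n_φ}, one has X̂₁₂ = 0, and both X̂₁₁ and X̂₂₂ are invertible. -/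
open Matrix

/-! The second block column of `fromBlocks J₁⁻¹ 0 0 0` vanishes, so the upper-right block of the
equation reads `Mu * X̂₁₂ = 0`, whence `X̂₁₂ = 0`. Then `X̂` is block lower triangular, and such a
matrix is invertible exactly when its diagonal blocks are. -/

namespace Matrix

variable {l m n o p α : Type*}

theorem toBlocks₁₂_add [Add α] (X Y : Matrix (l ⊕ n) (o ⊕ p) α) :
    (X + Y).toBlocks₁₂ = X.toBlocks₁₂ + Y.toBlocks₁₂ :=
  rfl

theorem toBlocks₁₂_fromBlocks_zero_mul [Fintype m] [Fintype n] [NonUnitalNonAssocSemiring α]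
    (A : Matrix l m α) (X : Matrix (m ⊕ n) (o ⊕ p) α) :
    (fromBlocks A 0 0 (0 : Matrix n n α) * X).toBlocks₁₂ = A * X.toBlocks₁₂ := by
  rw [← fromBlocks_toBlocks X, fromBlocks_multiply]
  simp

theorem toBlocks₁₂_mul_fromBlocks_zero [Fintype o] [Fintype p] [NonUnitalNonAssocSemiring α]
    (Y : Matrix (l ⊕ n) (o ⊕ p) α) (B : Matrix o o α) :
    (Y * fromBlocks B 0 0 (0 : Matrix p p α)).toBlocks₁₂ = 0 := by
  rw [← fromBlocks_toBlocks Y, fromBlocks_multiply]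
  simp

variable [Fintype m] [DecidableEq m] [CommRing α]

theorem eq_zero_of_isUnit_of_mul_eq_zero {A : Matrix m m α} (hA : IsUnit A)
    {Y : Matrix m l α} (h : A * Y = 0) : Y = 0 := by
  rw [← nonsing_inv_mul_cancel_left A Y ((isUnit_iff_isUnit_det A).mp hA), h, Matrix.mul_zero]

theorem toBlocks₁₂_eq_zero_of_fromBlocks_mul_add_mul_fromBlocks_eq_zero [Fintype n]
    {A : Matrix m m α} (hA : IsUnit A) (K : Matrix (m ⊕ n) (m ⊕ n) α)
    {X : Matrix (m ⊕ n) (m ⊕ n) α} (B : Matrix m m α)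
    (h : fromBlocks A 0 0 0 * X + K * X * fromBlocks B 0 0 0 = 0) : X.toBlocks₁₂ = 0 := by
  have h₁₂ := congrArg toBlocks₁₂ h
  rw [toBlocks₁₂_add, toBlocks₁₂_fromBlocks_zero_mul, toBlocks₁₂_mul_fromBlocks_zero,
    add_zero] at h₁₂
  exact eq_zero_of_isUnit_of_mul_eq_zero hA h₁₂

end Matrix

theorem jordan_pair_block_structure_general (nu nφ : ℕ)
    (Mu : Matrix (Fin nu) (Fin nu) ℝ) (hMuUnit : IsUnit Mu)
    (K : Matrix (Fin nu ⊕ Fin nφ) (Fin nu ⊕ Fin nφ) ℝ)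
    (Xhat : Matrix (Fin nu ⊕ Fin nφ) (Fin nu ⊕ Fin nφ) ℝ)
    (hXhatUnit : IsUnit Xhat)
    (J₁ : Matrix (Fin nu) (Fin nu) ℝ)
    (M : Matrix (Fin nu ⊕ Fin nφ) (Fin nu ⊕ Fin nφ) ℝ)
    (hM : M = fromBlocks Mu 0 0 0)
    (heig : M * Xhat + K * Xhat * fromBlocks J₁⁻¹ 0 0 0 = 0) :
    Xhat.toBlocks₁₂ = 0 ∧ IsUnit Xhat.toBlocks₁₁ ∧ IsUnit Xhat.toBlocks₂₂ := by
  subst hM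
  have hX₁₂ := toBlocks₁₂_eq_zero_of_fromBlocks_mul_add_mul_fromBlocks_eq_zero hMuUnit K _ heig
  rw [← fromBlocks_toBlocks Xhat, hX₁₂, isUnit_fromBlocks_zero₁₂] at hXhatUnit
  exact ⟨hX₁₂, hXhatUnit⟩

/-- Let `M = [[Mu, 0],[0,0]]` with `Mu` invertible, `K` arbitrary,
`X̂` invertible and `Ĵ₁` an invertible diagonal matrix. If
`M X̂ + K X̂ [[Ĵ₁⁻¹, 0],[0,0]] = 0`, then, partitioning `X̂` into blocks of sizes
`nu` and `nφ`, the upper-right block of `X̂` vanishes and the two diagonal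
blocks of `X̂` are invertible. -/
theorem jordan_pair_block_structure (nu nφ : ℕ)
    (Mu : Matrix (Fin nu) (Fin nu) ℝ) (hMuUnit : IsUnit Mu)
    (K : Matrix (Fin nu ⊕ Fin nφ) (Fin nu ⊕ Fin nφ) ℝ)
    (Xhat : Matrix (Fin nu ⊕ Fin nφ) (Fin nu ⊕ Fin nφ) ℝ)
    (hXhatUnit : IsUnit Xhat)
    (J₁ : Matrix (Fin nu) (Fin nu) ℝ)
    (hJ₁diag : ∀ i j, i ≠ j → J₁ i j = 0) (hJ₁Unit : IsUnit J₁)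
    (M : Matrix (Fin nu ⊕ Fin nφ) (Fin nu ⊕ Fin nφ) ℝ)
    (hM : M = fromBlocks Mu 0 0 0)
    (heig : M * Xhat + K * Xhat * fromBlocks J₁⁻¹ 0 0 0 = 0) :
    Xhat.toBlocks₁₂ = 0 ∧ IsUnit Xhat.toBlocks₁₁ ∧ IsUnit Xhat.toBlocks₂₂ :=
  jordan_pair_block_structure_general nu nφ Mu hMuUnit K Xhat hXhatUnit J₁ M hM heig
end

section
/- (Necessity part of the spectral decomposition theorem.) Suppose there exist a symmetric invertible matrix M_u ∈ ℝ^{n_u×n_u} and a symmetric invertible matrix K ∈ ℝ^{n×n} such that MX + KXJ = 0, where M = [[M_u, 0],[0, 0]]. Then there exist a symmetric matrix Γ = [[Γ₁₁, 0],[0, 0]] ∈ ℝ^{n×n} with Γ₁₁ ∈ ℝ^{n_u×n_u} invertible, and a symmetric invertible matrix Φ ∈ ℝ^{n_φ×n_φ}, such that: (i) Γ + X_φᵀΦX_φ is invertible, and, setting T := (Γ + X_φᵀΦX_φ)⁻¹, (ii) J₁ᵀΓ₁₁ = Γ₁₁J₁, (iii) X_u T X_φᵀ = 0, (iv) X_φ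 T X_φᵀ = Φ⁻¹; moreover X_u T X_uᵀ is invertible with M_u = (X_u T X_uᵀ)⁻¹, and there exists a symmetric invertible matrix K'₂₂ ∈ ℝ^{n_φ×n_φ} such that K = X^{-T}·[[−Γ₁₁J₁⁻¹, 0],[0, K'₂₂]]·X⁻¹. -/
/-!
Pass to `W := Xᵀ K X`, which is symmetric and invertible. Multiplying `M X + K X J = 0` by `Xᵀ`
gives `W J = -Xᵀ M X`, a symmetric matrix, so `Jᵀ W = W J`; since `J₁` is invertible this forces
`W = diag(A, D)` with `J₁ᵀ A = A J₁`. Take `Γ₁₁ := -A J₁`, so that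
`diag(Γ₁₁, 0) = Xᵀ M X = Xuᵀ Mu Xu`, and `Φ := 1`. Then `Γ + Xφᵀ Xφ = Xᵀ diag(Mu, 1) X`, hence
`X T Xᵀ = diag(Mu⁻¹, 1)`, whose blocks are the identities for `T`; finally `K = X⁻ᵀ W X⁻¹`
with `K₂₂' := D`.
-/

namespace Matrix

variable {ι m n R : Type*}

theorem transpose_fromRows_mul_fromBlocks_mul_fromRows [Fintype m] [Fintype n] [Semiring R]
    (A₁ : Matrix m ι R) (A₂ : Matrix n ι R) (D₁ : Matrix m m R) (D₂ : Matrix n n R) :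
    (fromRows A₁ A₂)ᵀ * fromBlocks D₁ 0 0 D₂ * fromRows A₁ A₂ = A₁ᵀ * D₁ * A₁ + A₂ᵀ * D₂ * A₂ := by
  rw [transpose_fromRows, fromCols_mul_fromBlocks, fromCols_mul_fromRows]
  simp

theorem fromRows_mul_mul_transpose_fromRows [Fintype ι] [Semiring R] (A₁ : Matrix m ι R)
    (A₂ : Matrix n ι R) (T : Matrix ι ι R) :
    fromRows A₁ A₂ * T * (fromRows A₁ A₂)ᵀ =
      fromBlocks (A₁ * T * A₁ᵀ) (A₁ * T * A₂ᵀ) (A₂ * T * A₁ᵀ) (A₂ * T * A₂ᵀ) := by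
  rw [fromRows_mul, transpose_fromRows, fromRows_mul_fromCols]

theorem mul_inv_transpose_mul_mul_mul_transpose [Fintype ι] [DecidableEq ι] [CommRing R]
    {X : Matrix ι ι R} (hX : IsUnit X) (D : Matrix ι ι R) : X * (Xᵀ * D * X)⁻¹ * Xᵀ = D⁻¹ := by
  have hXdet := (isUnit_iff_isUnit_det X).mp hX
  rw [mul_inv_rev, mul_inv_rev, ← mul_assoc, mul_nonsing_inv _ hXdet, one_mul, mul_assoc,
    nonsing_inv_mul _ (isUnit_det_transpose _ hXdet), mul_one]

theorem inv_transpose_mul_transpose_mul_mul_mul_inv [Fintype ι] [DecidableEq ι] [CommRing R]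
    {X : Matrix ι ι R} (hX : IsUnit X) (K : Matrix ι ι R) : X⁻¹ᵀ * (Xᵀ * K * X) * X⁻¹ = K := by
  have hXdet := (isUnit_iff_isUnit_det X).mp hX
  rw [← mul_assoc, ← mul_assoc, ← transpose_mul, mul_nonsing_inv _ hXdet, transpose_one, one_mul,
    mul_nonsing_inv_cancel_right _ _ hXdet]

theorem IsSymm.transpose_mul_mul [Fintype m] [CommSemiring R] {A : Matrix m m R} (hA : A.IsSymm)
    (X : Matrix m n R) : (Xᵀ * A * X).IsSymm := by
  rw [IsSymm, transpose_mul, transpose_mul, transpose_transpose, hA.eq, Matrix.mul_assoc]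

theorem transpose_fromBlocks_mul_eq_mul_fromBlocks_iff [Fintype m] [Fintype n] [DecidableEq m]
    [CommRing R] {J₁ A : Matrix m m R} {B : Matrix m n R} {C : Matrix n m R} {D : Matrix n n R}
    (hJ₁ : IsUnit J₁) :
    (fromBlocks J₁ 0 0 0)ᵀ * fromBlocks A B C D = fromBlocks A B C D * fromBlocks J₁ 0 0 0 ↔
      B = 0 ∧ C = 0 ∧ J₁ᵀ * A = A * J₁ := by
  have hJ₁det := (isUnit_iff_isUnit_det J₁).mp hJ₁
  simp only [fromBlocks_transpose, fromBlocks_multiply, transpose_zero, Matrix.zero_mul,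
    Matrix.mul_zero, add_zero, fromBlocks_inj]
  constructor
  · rintro ⟨hA, hB, hC, -⟩
    refine ⟨?_, ?_, hA⟩
    · rw [← nonsing_inv_mul_cancel_left J₁ᵀ B (isUnit_det_transpose _ hJ₁det), hB,
        Matrix.mul_zero]
    · rw [← mul_nonsing_inv_cancel_right J₁ C hJ₁det, ← hC, Matrix.zero_mul]
  · rintro ⟨rfl, rfl, h⟩
    simp [h]

theorem exists_eq_fromBlocks_of_isSymm_mul_fromBlocks [Fintype m] [Fintype n]
    [DecidableEq m] [CommRing R] {W : Matrix (m ⊕ n) (m ⊕ n) R} {J₁ : Matrix m m R}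
    (hW : W.IsSymm) (hJ₁ : IsUnit J₁) (hWJ : (W * fromBlocks J₁ 0 0 0).IsSymm) :
    ∃ A D, W = fromBlocks A 0 0 D ∧ J₁ᵀ * A = A * J₁ := by
  obtain ⟨A, B, C, D, rfl⟩ : ∃ A B C D, W = fromBlocks A B C D :=
    ⟨_, _, _, _, (fromBlocks_toBlocks W).symm⟩
  have hcomm : (fromBlocks J₁ 0 0 0)ᵀ * fromBlocks A B C D =
      fromBlocks A B C D * fromBlocks J₁ 0 0 0 := by
    rw [← hWJ.eq, transpose_mul, hW.eq]
  obtain ⟨rfl, rfl, hAJ⟩ := (transpose_fromBlocks_mul_eq_mul_fromBlocks_iff hJ₁).mp hcomm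
  exact ⟨A, D, rfl, hAJ⟩

theorem exists_transpose_mul_mul_eq_fromBlocks_of_mul_add_mul_mul_eq_zero [Fintype m] [Fintype n]
    [DecidableEq m] [CommRing R] {M K X : Matrix (m ⊕ n) (m ⊕ n) R} {J₁ : Matrix m m R}
    (hM : M.IsSymm) (hK : K.IsSymm) (hJ₁ : IsUnit J₁)
    (h : M * X + K * X * fromBlocks J₁ 0 0 0 = 0) :
    ∃ A D, Xᵀ * K * X = fromBlocks A 0 0 D ∧ J₁ᵀ * A = A * J₁ ∧
      Xᵀ * M * X = fromBlocks (-(A * J₁)) 0 0 0 := by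
  have hWJ : Xᵀ * K * X * fromBlocks J₁ 0 0 0 = -(Xᵀ * M * X) := by
    rw [eq_neg_iff_add_eq_zero, add_comm]
    simpa only [mul_add, mul_assoc, mul_zero] using congrArg (Xᵀ * ·) h
  obtain ⟨A, D, hW, hAJ⟩ := exists_eq_fromBlocks_of_isSymm_mul_fromBlocks (hK.transpose_mul_mul X)
    hJ₁ (by rw [hWJ]; exact (hM.transpose_mul_mul X).neg)
  refine ⟨A, D, hW, hAJ, ?_⟩
  rw [← neg_neg (Xᵀ * M * X), ← hWJ, hW, fromBlocks_multiply]
  simp [fromBlocks_neg]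

end Matrix

open Matrix

theorem spectral_decomposition_necessity_general (nu nφ : ℕ)
    (Xu : Matrix (Fin nu) (Fin nu ⊕ Fin nφ) ℝ)
    (Xφ : Matrix (Fin nφ) (Fin nu ⊕ Fin nφ) ℝ)
    (X : Matrix (Fin nu ⊕ Fin nφ) (Fin nu ⊕ Fin nφ) ℝ)
    (hX : X = fromRows Xu Xφ) (hXUnit : IsUnit X)
    (J₁ : Matrix (Fin nu) (Fin nu) ℝ)
    (hJ₁Unit : IsUnit J₁)
    (J : Matrix (Fin nu ⊕ Fin nφ) (Fin nu ⊕ Fin nφ) ℝ)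
    (hJ : J = fromBlocks J₁ 0 0 0)
    (Mu : Matrix (Fin nu) (Fin nu) ℝ)
    (hMuSymm : Muᵀ = Mu) (hMuUnit : IsUnit Mu)
    (K : Matrix (Fin nu ⊕ Fin nφ) (Fin nu ⊕ Fin nφ) ℝ)
    (hKSymm : Kᵀ = K) (hKUnit : IsUnit K)
    (M : Matrix (Fin nu ⊕ Fin nφ) (Fin nu ⊕ Fin nφ) ℝ)
    (hM : M = fromBlocks Mu 0 0 0)
    (heq : M * X + K * X * J = 0) :
    ∃ (Γ₁₁ : Matrix (Fin nu) (Fin nu) ℝ) (Φ : Matrix (Fin nφ) (Fin nφ) ℝ),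
      Γ₁₁ᵀ = Γ₁₁ ∧ IsUnit Γ₁₁ ∧ Φᵀ = Φ ∧ IsUnit Φ ∧
      IsUnit (fromBlocks Γ₁₁ 0 0 0 + Xφᵀ * Φ * Xφ) ∧
      (let T := (fromBlocks Γ₁₁ 0 0 (0 : Matrix (Fin nφ) (Fin nφ) ℝ)
          + Xφᵀ * Φ * Xφ)⁻¹;
        J₁ᵀ * Γ₁₁ = Γ₁₁ * J₁ ∧
        Xu * T * Xφᵀ = 0 ∧
        Xφ * T * Xφᵀ = Φ⁻¹ ∧
        IsUnit (Xu * T * Xuᵀ) ∧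
        Mu = (Xu * T * Xuᵀ)⁻¹ ∧
        ∃ K₂₂' : Matrix (Fin nφ) (Fin nφ) ℝ, K₂₂'ᵀ = K₂₂' ∧ IsUnit K₂₂' ∧
          K = (X⁻¹)ᵀ * fromBlocks (-(Γ₁₁ * J₁⁻¹)) 0 0 K₂₂' * X⁻¹) := by
  subst hJ hM
  obtain ⟨A, D, hW, hAJ, hMX⟩ := exists_transpose_mul_mul_eq_fromBlocks_of_mul_add_mul_mul_eq_zero
    (IsSymm.fromBlocks hMuSymm (by simp) isSymm_zero) hKSymm hJ₁Unit heq
  have hXt : IsUnit Xᵀ := (isUnit_transpose X).mpr hXUnit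
  obtain ⟨hAsymm, -, -, hDsymm⟩ :=
    isSymm_fromBlocks_iff.mp (hW ▸ IsSymm.transpose_mul_mul hKSymm X)
  obtain ⟨hAUnit, hDUnit⟩ : IsUnit A ∧ IsUnit D := by
    rw [← isUnit_fromBlocks_zero₂₁, ← hW]
    exact (hXt.mul hKUnit).mul hXUnit
  have hS : fromBlocks (-(A * J₁)) 0 0 0 + Xφᵀ * (1 : Matrix (Fin nφ) (Fin nφ) ℝ) * Xφ =
      Xᵀ * fromBlocks Mu 0 0 1 * X := by
    rw [← hMX, hX]
    simp only [transpose_fromRows_mul_fromBlocks_mul_fromRows, Matrix.mul_zero, Matrix.zero_mul,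
      add_zero]
  have hT := mul_inv_transpose_mul_mul_mul_transpose hXUnit (fromBlocks Mu 0 0 1)
  rw [← hS, inv_fromBlocks_zero₂₁_of_isUnit_iff _ _ _ (by simp [hMuUnit]), hX,
    fromRows_mul_mul_transpose_fromRows, fromBlocks_inj] at hT
  obtain ⟨huu, huφ, -, hφφ⟩ := hT
  refine ⟨-(A * J₁), 1, ?_, (hAUnit.mul hJ₁Unit).neg, transpose_one, isUnit_one,
    hS ▸ (hXt.mul (by simpa using hMuUnit)).mul hXUnit, ?_⟩
  · rw [transpose_neg, transpose_mul, hAsymm.eq, hAJ]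
  dsimp only
  refine ⟨by rw [mul_neg, neg_mul, ← mul_assoc, hAJ, mul_assoc], by simpa using huφ, hφφ,
    by rw [huu]; exact isUnit_nonsing_inv_iff.mpr hMuUnit,
    by rw [huu, nonsing_inv_nonsing_inv _ ((isUnit_iff_isUnit_det Mu).mp hMuUnit)],
    D, hDsymm, hDUnit, ?_⟩
  rw [neg_mul, neg_neg, mul_nonsing_inv_cancel_right _ _ ((isUnit_iff_isUnit_det J₁).mp hJ₁Unit),
    ← hW, inv_transpose_mul_transpose_mul_mul_mul_inv hXUnit]

/-- necessity part of the spectral decomposition theorem: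
Let `X = [Xu; Xφ]` be invertible, `J₁` invertible diagonal, `J = diag(J₁, 0)`.
If there exist symmetric invertible `Mu` and symmetric invertible `K` with
`M X + K X J = 0`, `M = diag(Mu, 0)`, then there exist a symmetric `Γ₁₁`
(invertible) and a symmetric invertible `Φ` such that, with
`T = (diag(Γ₁₁,0) + Xφᵀ Φ Xφ)⁻¹`: `J₁ᵀ Γ₁₁ = Γ₁₁ J₁`, `Xu T Xφᵀ = 0`,
`Xφ T Xφᵀ = Φ⁻¹`, `Xu T Xuᵀ` is invertible with `Mu = (Xu T Xuᵀ)⁻¹`, and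
`K = X⁻ᵀ [[−Γ₁₁ J₁⁻¹, 0],[0, K₂₂']] X⁻¹` for some symmetric invertible `K₂₂'`. -/
theorem spectral_decomposition_necessity (nu nφ : ℕ)
    (Xu : Matrix (Fin nu) (Fin nu ⊕ Fin nφ) ℝ)
    (Xφ : Matrix (Fin nφ) (Fin nu ⊕ Fin nφ) ℝ)
    (X : Matrix (Fin nu ⊕ Fin nφ) (Fin nu ⊕ Fin nφ) ℝ)
    (hX : X = fromRows Xu Xφ) (hXUnit : IsUnit X)
    (J₁ : Matrix (Fin nu) (Fin nu) ℝ)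
    (hJ₁diag : ∀ i j, i ≠ j → J₁ i j = 0) (hJ₁Unit : IsUnit J₁)
    (J : Matrix (Fin nu ⊕ Fin nφ) (Fin nu ⊕ Fin nφ) ℝ)
    (hJ : J = fromBlocks J₁ 0 0 0)
    (Mu : Matrix (Fin nu) (Fin nu) ℝ)
    (hMuSymm : Muᵀ = Mu) (hMuUnit : IsUnit Mu)
    (K : Matrix (Fin nu ⊕ Fin nφ) (Fin nu ⊕ Fin nφ) ℝ)
    (hKSymm : Kᵀ = K) (hKUnit : IsUnit K)
    (M : Matrix (Fin nu ⊕ Fin nφ) (Fin nu ⊕ Fin nφ) ℝ)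
    (hM : M = fromBlocks Mu 0 0 0)
    (heq : M * X + K * X * J = 0) :
    ∃ (Γ₁₁ : Matrix (Fin nu) (Fin nu) ℝ) (Φ : Matrix (Fin nφ) (Fin nφ) ℝ),
      Γ₁₁ᵀ = Γ₁₁ ∧ IsUnit Γ₁₁ ∧ Φᵀ = Φ ∧ IsUnit Φ ∧
      IsUnit (fromBlocks Γ₁₁ 0 0 0 + Xφᵀ * Φ * Xφ) ∧
      (let T := (fromBlocks Γ₁₁ 0 0 (0 : Matrix (Fin nφ) (Fin nφ) ℝ)
          + Xφᵀ * Φ * Xφ)⁻¹;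
        J₁ᵀ * Γ₁₁ = Γ₁₁ * J₁ ∧
        Xu * T * Xφᵀ = 0 ∧
        Xφ * T * Xφᵀ = Φ⁻¹ ∧
        IsUnit (Xu * T * Xuᵀ) ∧
        Mu = (Xu * T * Xuᵀ)⁻¹ ∧
        ∃ K₂₂' : Matrix (Fin nφ) (Fin nφ) ℝ, K₂₂'ᵀ = K₂₂' ∧ IsUnit K₂₂' ∧
          K = (X⁻¹)ᵀ * fromBlocks (-(Γ₁₁ * J₁⁻¹)) 0 0 K₂₂' * X⁻¹) :=
  spectral_decomposition_necessity_general nu nφ Xu Xφ X hX hXUnit J₁ hJ₁Unit J hJ Mu hMuSymm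
    hMuUnit K hKSymm hKUnit M hM heq
end

section
/- Let Γ₁₁ ∈ ℝ^{n_u×n_u} be symmetric, partitioned as Γ₁₁ = [[Γ₁, G],[Gᵀ, Γ₂]] with Γ₁ ∈ ℝ^{p×p}, and suppose D^{-T} Γ₁₁ = Γ₁₁ D⁻¹, where D = [[Λ₁, 0],[0, Λ₃]]. Then G = 0, i.e. Γ₁₁ = [[Γ₁, 0],[0, Γ₂]] is block diagonal, and the diagonal blocks satisfy Λ₁^{-T} Γ₁ = Γ₁ Λ₁⁻¹ and Λ₃^{-T} Γ₂ = Γ₂ Λ₃⁻¹. -/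
/-!
Comparing off-diagonal blocks of `D⁻ᵀ Γ₁₁ = Γ₁₁ D⁻¹` gives `Λ₁⁻ᵀ G = G Λ₃⁻¹`, i.e. the
Sylvester equation `Λ₁ᵀ G = G Λ₃`; the diagonal blocks give the other two identities.
An intertwiner satisfies `q(Λ₁ᵀ) G = G q(Λ₃)` for every polynomial `q`, and for `q = χ_{Λ₃}`
the right side vanishes by Cayley–Hamilton. Disjoint complex spectra make `χ_{Λ₁}` and `χ_{Λ₃}`
coprime, so by Bézout and Cayley–Hamilton again `χ_{Λ₃}(Λ₁ᵀ)` is invertible, whence `G = 0`.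
-/

open Matrix Polynomial

namespace Matrix

section CommRing

variable {R : Type*} [CommRing R] {m n : Type*} [Fintype m] [DecidableEq m]
  [Fintype n] [DecidableEq n]

theorem pow_mul_eq_mul_pow_of_mul_eq_mul {A : Matrix m m R} {B : Matrix n n R}
    {G : Matrix m n R} (h : A * G = G * B) (k : ℕ) : A ^ k * G = G * B ^ k := by
  induction k with
  | zero => simp
  | succ k ih =>
    rw [pow_succ, pow_succ, Matrix.mul_assoc, h, ← Matrix.mul_assoc, ih, Matrix.mul_assoc]

theorem aeval_mul_eq_mul_aeval_of_mul_eq_mul {A : Matrix m m R} {B : Matrix n n R}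
    {G : Matrix m n R} (h : A * G = G * B) (q : R[X]) : aeval A q * G = G * aeval B q := by
  simp only [aeval_eq_sum_range, Matrix.sum_mul, Matrix.mul_sum, Matrix.smul_mul,
    Matrix.mul_smul, pow_mul_eq_mul_pow_of_mul_eq_mul h]

theorem eq_zero_of_mul_eq_mul_of_isCoprime_charpoly {A : Matrix m m R} {B : Matrix n n R}
    {G : Matrix m n R} (h : A * G = G * B) (hAB : IsCoprime A.charpoly B.charpoly) :
    G = 0 := by
  obtain ⟨u, v, huv⟩ := hAB
  have hv : aeval A v * aeval A B.charpoly = 1 := by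
    simpa [aeval_self_charpoly] using congrArg (aeval A) huv
  calc G = aeval A v * (aeval A B.charpoly * G) := by
        rw [← Matrix.mul_assoc, hv, Matrix.one_mul]
    _ = 0 := by
        rw [aeval_mul_eq_mul_aeval_of_mul_eq_mul h, aeval_self_charpoly, Matrix.mul_zero,
          Matrix.mul_zero]

theorem mul_eq_mul_of_inv_mul_eq_mul_inv {A : Matrix m m R} {B : Matrix n n R}
    {G : Matrix m n R} (hA : IsUnit A) (hB : IsUnit B) (h : A⁻¹ * G = G * B⁻¹) :
    A * G = G * B := by
  rw [isUnit_iff_isUnit_det] at hA hB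
  calc A * G = A * (G * B⁻¹) * B := by
        rw [Matrix.mul_assoc A, Matrix.mul_assoc, nonsing_inv_mul _ hB, Matrix.mul_one]
    _ = G * B := by rw [← h, ← Matrix.mul_assoc, mul_nonsing_inv _ hA, Matrix.one_mul]

theorem inv_fromBlocks_zero₁₂_zero₂₁ {A : Matrix m m R} {D : Matrix n n R} (hA : IsUnit A)
    (hD : IsUnit D) : (fromBlocks A 0 0 D)⁻¹ = fromBlocks A⁻¹ 0 0 D⁻¹ := by
  simp [inv_fromBlocks_zero₂₁_of_isUnit_iff A 0 D (iff_of_true hA hD)]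

end CommRing

variable {K L : Type*} {m n : Type*} [Fintype m] [DecidableEq m] [Fintype n] [DecidableEq n]

theorem aeval_charpoly_eq_zero_iff [CommRing K] [CommRing L] [Algebra K L]
    (M : Matrix n n K) (μ : L) :
    aeval μ M.charpoly = 0 ↔ (M.map (algebraMap K L) - μ • 1).det = 0 := by
  rw [← eval_map_algebraMap, ← charpoly_map, eval_charpoly, ← neg_sub, det_neg]
  simp [smul_one_eq_diagonal, scalar_apply]

theorem isCoprime_charpoly_of_not_exists_common_eigenvalue [Field K] [Field L]
    [IsAlgClosed L] [Algebra K L] {A : Matrix m m K} {B : Matrix n n K}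
    (h : ¬ ∃ μ : L, (A.map (algebraMap K L) - μ • 1).det = 0 ∧
      (B.map (algebraMap K L) - μ • 1).det = 0) :
    IsCoprime A.charpoly B.charpoly := by
  rw [isCoprime_iff_aeval_ne_zero_of_isAlgClosed K L]
  intro μ
  simpa only [aeval_charpoly_eq_zero_iff, ← not_and_or] using fun hμ => h ⟨μ, hμ⟩

end Matrix

theorem gamma_block_diagonal_general (p m : ℕ)
    (Λ₁ : Matrix (Fin p) (Fin p) ℝ) (hΛ₁Unit : IsUnit Λ₁)
    (Λ₃ : Matrix (Fin m) (Fin m) ℝ) (hΛ₃Unit : IsUnit Λ₃)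
    (hdisj : ¬ ∃ μ : ℂ,
      (Λ₁.map (Complex.ofReal) - μ • 1).det = 0 ∧
      (Λ₃.map (Complex.ofReal) - μ • 1).det = 0)
    (Γ₁ : Matrix (Fin p) (Fin p) ℝ)
    (G : Matrix (Fin p) (Fin m) ℝ)
    (Γ₂ : Matrix (Fin m) (Fin m) ℝ)
    (Γ₁₁ : Matrix (Fin p ⊕ Fin m) (Fin p ⊕ Fin m) ℝ)
    (hΓ₁₁ : Γ₁₁ = fromBlocks Γ₁ G Gᵀ Γ₂)
    (D : Matrix (Fin p ⊕ Fin m) (Fin p ⊕ Fin m) ℝ)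
    (hD : D = fromBlocks Λ₁ 0 0 Λ₃)
    (hcomm : (D⁻¹)ᵀ * Γ₁₁ = Γ₁₁ * D⁻¹) :
    G = 0 ∧ (Λ₁⁻¹)ᵀ * Γ₁ = Γ₁ * Λ₁⁻¹ ∧ (Λ₃⁻¹)ᵀ * Γ₂ = Γ₂ * Λ₃⁻¹ := by
  subst hΓ₁₁ hD
  rw [inv_fromBlocks_zero₁₂_zero₂₁ hΛ₁Unit hΛ₃Unit, fromBlocks_transpose, fromBlocks_multiply,
    fromBlocks_multiply] at hcomm
  simp only [transpose_zero, Matrix.zero_mul, Matrix.mul_zero, add_zero, zero_add] at hcomm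
  obtain ⟨h₁, hG, -, h₂⟩ := fromBlocks_inj.mp hcomm
  refine ⟨?_, h₁, h₂⟩
  rw [transpose_nonsing_inv] at hG
  refine eq_zero_of_mul_eq_mul_of_isCoprime_charpoly
    (mul_eq_mul_of_inv_mul_eq_mul_inv ((isUnit_transpose Λ₁).mpr hΛ₁Unit) hΛ₃Unit hG) ?_
  rw [charpoly_transpose]
  exact isCoprime_charpoly_of_not_exists_common_eigenvalue (L := ℂ) hdisj

/-- Let `Λ₁ ∈ ℝ^{p×p}` and `Λ₃ ∈ ℝ^{m×m}` (`m = n_u − p`) be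
invertible with disjoint complex spectra, `D = diag(Λ₁, Λ₃)`, and let
`Γ₁₁ = [[Γ₁, G],[Gᵀ, Γ₂]]` be symmetric with `D⁻ᵀ Γ₁₁ = Γ₁₁ D⁻¹`. Then `G = 0`
and `Λ₁⁻ᵀ Γ₁ = Γ₁ Λ₁⁻¹`, `Λ₃⁻ᵀ Γ₂ = Γ₂ Λ₃⁻¹`. -/
theorem gamma_block_diagonal (p m : ℕ)
    (Λ₁ : Matrix (Fin p) (Fin p) ℝ) (hΛ₁Unit : IsUnit Λ₁)
    (Λ₃ : Matrix (Fin m) (Fin m) ℝ) (hΛ₃Unit : IsUnit Λ₃)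
    (hdisj : ¬ ∃ μ : ℂ,
      (Λ₁.map (Complex.ofReal) - μ • 1).det = 0 ∧
      (Λ₃.map (Complex.ofReal) - μ • 1).det = 0)
    (Γ₁ : Matrix (Fin p) (Fin p) ℝ) (hΓ₁Symm : Γ₁ᵀ = Γ₁)
    (G : Matrix (Fin p) (Fin m) ℝ)
    (Γ₂ : Matrix (Fin m) (Fin m) ℝ) (hΓ₂Symm : Γ₂ᵀ = Γ₂)
    (Γ₁₁ : Matrix (Fin p ⊕ Fin m) (Fin p ⊕ Fin m) ℝ)
    (hΓ₁₁ : Γ₁₁ = fromBlocks Γ₁ G Gᵀ Γ₂)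
    (D : Matrix (Fin p ⊕ Fin m) (Fin p ⊕ Fin m) ℝ)
    (hD : D = fromBlocks Λ₁ 0 0 Λ₃)
    (hcomm : (D⁻¹)ᵀ * Γ₁₁ = Γ₁₁ * D⁻¹) :
    G = 0 ∧ (Λ₁⁻¹)ᵀ * Γ₁ = Γ₁ * Λ₁⁻¹ ∧ (Λ₃⁻¹)ᵀ * Γ₂ = Γ₂ * Λ₃⁻¹ :=
  gamma_block_diagonal_general p m Λ₁ hΛ₁Unit Λ₃ hΛ₃Unit hdisj Γ₁ G Γ₂ Γ₁₁ hΓ₁₁ D hD hcomm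
end
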